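/- For an additive category 𝔞, the homotopy category of the Vogel dg category admits an orthogonal decomposition H^0(𝒱(𝔞)) = H^0(𝒱^-(𝔞)) × H^0(𝒱^+(𝔞)): there are no nonzero Hom groups in either direction between the bounded-above part and the bounded-below part, and every object decomposes as a direct sum of an object of each part. -/

import Mathlib

open CategoryTheory Limits ZeroObject

section Brutal

variable {C : Type*} [Category C] [Preadditive C] [HasZeroObject C]

/-- The brutal truncation `σ_{≥ n} X` of a cochain complex. -/
noncomputable def truncGE (X : CochainComplex C ℤ) (n : ℤ) : CochainComplex C ℤ :=
  CochainComplex.of (fun i => if n ≤ i then X.X i else 0)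
    (fun i =>
      if hi : n ≤ i then
        eqToHom (if_pos hi) ≫ X.d i (i + 1) ≫ eqToHom (if_pos (by omega : n ≤ i + 1)).symm
      else 0)
    (fun i => by
      try dsimp only
      by_cases hi : n ≤ i
      · rw [dif_pos hi, dif_pos (show n ≤ i + 1 by omega)]; simp
      · rw [dif_neg hi]; simp)

lemma truncGE_X (X : CochainComplex C ℤ) (n i : ℤ) :
    (truncGE X n).X i = if n ≤ i then X.X i else 0 := rfl

lemma truncGE_d (X : CochainComplex C ℤ) (n i : ℤ) :
    (truncGE X n).d i (i + 1) =
      if hi : n ≤ i then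
        eqToHom (if_pos hi) ≫ X.d i (i + 1) ≫ eqToHom (if_pos (by omega : n ≤ i + 1)).symm
      else 0 :=
  by unfold truncGE; simp [CochainComplex.of_d]

/-- The brutal truncation `σ_{≤ n} X` of a cochain complex. -/
noncomputable def truncLE (X : CochainComplex C ℤ) (n : ℤ) : CochainComplex C ℤ :=
  CochainComplex.of (fun i => if i ≤ n then X.X i else 0)
    (fun i =>
      if hj : i + 1 ≤ n then
        eqToHom (if_pos (by omega : i ≤ n)) ≫ X.d i (i + 1) ≫ eqToHom (if_pos hj).symm
      else 0)
    (fun i => by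
      try dsimp only
      by_cases hj : i + 1 + 1 ≤ n
      · rw [dif_pos (show i + 1 ≤ n by omega), dif_pos hj]; simp
      · rw [dif_neg hj]; simp)

lemma truncLE_X (X : CochainComplex C ℤ) (n i : ℤ) :
    (truncLE X n).X i = if i ≤ n then X.X i else 0 := rfl

lemma truncLE_d (X : CochainComplex C ℤ) (n i : ℤ) :
    (truncLE X n).d i (i + 1) =
      if hj : i + 1 ≤ n then
        eqToHom (if_pos (by omega : i ≤ n)) ≫ X.d i (i + 1) ≫ eqToHom (if_pos hj).symm
      else 0 :=
  by unfold truncLE; simp [CochainComplex.of_d]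

/-- The canonical inclusion `σ_{≥ n} X ⟶ X`. -/
noncomputable def truncGEι (X : CochainComplex C ℤ) (n : ℤ) : truncGE X n ⟶ X where
  f i := if hi : n ≤ i then eqToHom ((truncGE_X X n i).trans (if_pos hi)) else 0
  comm' := by
    rintro i j (rfl : i + 1 = j)
    try dsimp only
    rw [truncGE_d]
    by_cases hi : n ≤ i
    · rw [dif_pos hi, dif_pos hi, dif_pos (show n ≤ i + 1 by omega)]; dsimp only [truncGE_X, truncLE_X]; (try simp only [Category.assoc]); (repeat erw [eqToHom_trans_assoc]); (repeat erw [eqToHom_trans]); (try simp); (try rfl)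
    · rw [dif_neg hi, dif_neg hi]; exact Eq.trans zero_comp (Eq.symm zero_comp)

/-- The canonical projection `X ⟶ σ_{≤ n} X`. -/
noncomputable def truncLEπ (X : CochainComplex C ℤ) (n : ℤ) : X ⟶ truncLE X n where
  f i := if hi : i ≤ n then eqToHom ((if_pos hi).symm.trans (truncLE_X X n i).symm) else 0
  comm' := by
    rintro i j (rfl : i + 1 = j)
    try dsimp only
    rw [truncLE_d]
    by_cases hj : i + 1 ≤ n
    · rw [dif_pos hj, dif_pos (show i ≤ n by omega), dif_pos hj]; dsimp only [truncGE_X, truncLE_X]; (try simp only [Category.assoc]); (repeat erw [eqToHom_trans_assoc]); (repeat erw [eqToHom_trans]); (try simp); (try rfl)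
    · rw [dif_neg hj, dif_neg hj]; exact Eq.trans comp_zero (Eq.symm comp_zero)

/-- The canonical projection `σ_{≤ a} X ⟶ σ_{≤ b} X` for `b ≤ a`. -/
noncomputable def truncLEmap (X : CochainComplex C ℤ) (a b : ℤ) (hba : b ≤ a) :
    truncLE X a ⟶ truncLE X b where
  f i := if hi : i ≤ b then
      eqToHom (((truncLE_X X a i).trans (if_pos (hi.trans hba))).trans
        (((truncLE_X X b i).trans (if_pos hi)).symm))
    else 0
  comm' := by
    rintro i j (rfl : i + 1 = j)
    try dsimp only
    rw [truncLE_d, truncLE_d]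
    by_cases hj : i + 1 ≤ b
    · rw [dif_pos hj, dif_pos (show i ≤ b by omega), dif_pos (show i + 1 ≤ a by omega),
        dif_pos hj]
      dsimp only [truncGE_X, truncLE_X]; (try simp only [Category.assoc]); (repeat erw [eqToHom_trans_assoc]); (repeat erw [eqToHom_trans]); (try simp); (try rfl)
    · rw [dif_neg hj, dif_neg hj]; erw [comp_zero, comp_zero]

/-- A complex is bounded above if its components vanish in all sufficiently
large degrees. -/
def BoundedAbove (X : CochainComplex C ℤ) : Prop :=
  ∃ b : ℤ, ∀ i : ℤ, b < i → IsZero (X.X i)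

/-- A complex is bounded below if its components vanish in all sufficiently
small degrees. -/
def BoundedBelow (X : CochainComplex C ℤ) : Prop :=
  ∃ a : ℤ, ∀ i : ℤ, i < a → IsZero (X.X i)

/-- A complex is bounded if it is bounded above and bounded below. -/
def BoundedComplex (X : CochainComplex C ℤ) : Prop :=
  BoundedAbove X ∧ BoundedBelow X

variable (C) [HasBinaryBiproducts C]

open Pretriangulated in
/-- The class of morphisms in the homotopy category `K(C)` whose cone is isomorphic
to a bounded complex; the Verdier quotient `K(C)/K^b(C)` is the localization of
`K(C)` at this class. -/
noncomputable def Wb : MorphismProperty (HomotopyCategory C (ComplexShape.up ℤ)) :=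
  fun X Y f =>
    ∃ (Z : HomotopyCategory C (ComplexShape.up ℤ)) (g : Y ⟶ Z) (h : Z ⟶ X⟦(1 : ℤ)⟧),
      (Triangle.mk f g h ∈ distTriang (HomotopyCategory C (ComplexShape.up ℤ))) ∧
      ∃ Z₀ : CochainComplex C ℤ, BoundedComplex Z₀ ∧
        Nonempty (Z ≅ (HomotopyCategory.quotient C (ComplexShape.up ℤ)).obj Z₀)

end Brutal

open CochainComplex.HomComplex

/-- A graded morphism (cochain) is bounded if only finitely many of its components
are nonzero.  Morphisms in the Vogel dg category `𝒱(𝔞)` are graded morphisms modulo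
bounded ones; `Hom` groups in `H⁰(𝒱(𝔞))` are almost-cochain maps (degree-zero graded
morphisms `f` with `δ f` bounded) modulo almost null-homotopic ones (those of the
form `δ h` up to a bounded morphism). -/
def IsBoundedCochain {C : Type*} [Category C] [Preadditive C]
    {K L : CochainComplex C ℤ} {n : ℤ} (z : Cochain K L n) : Prop :=
  {p : ℤ | z.v p (p + n) rfl ≠ 0}.Finite

section AuxVogel

variable {C : Type*} [Category C] [Preadditive C] [HasZeroObject C]

lemma isBounded_of_below_above {X Y : CochainComplex C ℤ}
    (hX : BoundedBelow X) (hY : BoundedAbove Y) (f : Cochain X Y 0) :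
    IsBoundedCochain f := by
  obtain ⟨a, ha⟩ := hX
  obtain ⟨b, hb⟩ := hY
  apply Set.Finite.subset (Set.finite_Icc a b)
  intro p hp
  simp only [Set.mem_setOf_eq] at hp
  by_contra h
  apply hp
  simp only [Set.mem_Icc, not_and_or, not_le] at h
  rcases h with h | h
  · exact (ha p h).eq_of_src _ _
  · exact (hb (p + 0) (by omega)).eq_of_tgt _ _

lemma isBounded_of_above_below {X Y : CochainComplex C ℤ}
    (hX : BoundedAbove X) (hY : BoundedBelow Y) (f : Cochain X Y 0) :
    IsBoundedCochain f := by
  obtain ⟨b, hb⟩ := hX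
  obtain ⟨a, ha⟩ := hY
  apply Set.Finite.subset (Set.finite_Icc a b)
  intro p hp
  simp only [Set.mem_setOf_eq] at hp
  by_contra h
  apply hp
  simp only [Set.mem_Icc, not_and_or, not_le] at h
  rcases h with h | h
  · exact (ha (p + 0) (by omega)).eq_of_tgt _ _
  · exact (hb p h).eq_of_src _ _

end AuxVogel

/-- **Orthogonal decomposition `H⁰(𝒱(𝔞)) = H⁰(𝒱^-(𝔞)) × H⁰(𝒱^+(𝔞))`.**
(1) Between bounded-above complexes and bounded-below complexes there are no nonzero
morphisms in `H⁰(𝒱(𝔞))` in either direction: every almost-cochain map is almost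
null-homotopic.  (2) Every complex `Z` decomposes in `H⁰(𝒱(𝔞))` as the direct sum
of a bounded-above complex and a bounded-below one: there are degree-zero graded
morphisms `ι : A ⊞ B ⟶ Z` and `π : Z ⟶ A ⊞ B`, closed modulo bounded morphisms,
mutually inverse modulo bounded morphisms. -/
theorem vogel_H0_orthogonal_decomposition
    {C : Type*} [Category C] [Preadditive C] [HasZeroObject C] [HasBinaryBiproducts C] :
    -- no morphisms from bounded-below to bounded-above in `H⁰(𝒱(𝔞))` …
    (∀ (X Y : CochainComplex C ℤ), BoundedBelow X → BoundedAbove Y →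
      ∀ f : Cochain X Y 0, IsBoundedCochain (δ 0 1 f) →
        ∃ h : Cochain X Y (-1), IsBoundedCochain (f - δ (-1) 0 h)) ∧
    -- … and none from bounded-above to bounded-below
    (∀ (X Y : CochainComplex C ℤ), BoundedAbove X → BoundedBelow Y →
      ∀ f : Cochain X Y 0, IsBoundedCochain (δ 0 1 f) →
        ∃ h : Cochain X Y (-1), IsBoundedCochain (f - δ (-1) 0 h)) ∧
    -- every object is the direct sum of an object of each part
    (∀ Z : CochainComplex C ℤ, ∃ (A B : CochainComplex C ℤ),
      BoundedAbove A ∧ BoundedBelow B ∧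
      ∃ (ι : Cochain (A ⊞ B) Z 0) (π : Cochain Z (A ⊞ B) 0),
        IsBoundedCochain (δ 0 1 ι) ∧ IsBoundedCochain (δ 0 1 π) ∧
        ι.comp π (zero_add 0) = Cochain.ofHom (𝟙 (A ⊞ B)) ∧
        IsBoundedCochain (π.comp ι (zero_add 0) - Cochain.ofHom (𝟙 Z))) := by
  refine ⟨fun X Y hX hY f _ => ⟨0, by simpa using isBounded_of_below_above hX hY f⟩,
    fun X Y hX hY f _ => ⟨0, by simpa using isBounded_of_above_below hX hY f⟩,
    fun Z => ?_⟩
  have hA0 : ∀ p : ℤ, p ≤ 0 → (truncLE Z 0).X p = Z.X p :=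
    fun p hp => (truncLE_X Z 0 p).trans (if_pos hp)
  have hA1 : ∀ p : ℤ, ¬ p ≤ 0 → (truncLE Z 0).X p = 0 :=
    fun p hp => (truncLE_X Z 0 p).trans (if_neg hp)
  have hB0 : ∀ p : ℤ, ¬ p ≤ 0 → (truncGE Z 1).X p = Z.X p :=
    fun p hp => (truncGE_X Z 1 p).trans (if_pos (by omega))
  have hB1 : ∀ p : ℤ, p ≤ 0 → (truncGE Z 1).X p = 0 :=
    fun p hp => (truncGE_X Z 1 p).trans (if_neg (by omega))
  have hAd : ∀ (p : ℤ) (hp : p + 1 ≤ 0), (truncLE Z 0).d p (p + 1) =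
      eqToHom (hA0 p (by omega)) ≫ Z.d p (p + 1) ≫ eqToHom (hA0 (p + 1) (by omega)).symm := by
    intro p hp
    rw [truncLE_d, dif_pos hp]; rfl
  have hBd : ∀ (p : ℤ) (hp : 1 ≤ p), (truncGE Z 1).d p (p + 1) =
      eqToHom (hB0 p (by omega)) ≫ Z.d p (p + 1) ≫ eqToHom (hB0 (p + 1) (by omega)).symm := by
    intro p hp
    rw [truncGE_d, dif_pos hp]; rfl
  have hinlfst : ∀ p : ℤ,
      (biprod.inl : truncLE Z 0 ⟶ truncLE Z 0 ⊞ truncGE Z 1).f p ≫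
        (biprod.fst : truncLE Z 0 ⊞ truncGE Z 1 ⟶ truncLE Z 0).f p =
        𝟙 ((truncLE Z 0).X p) := fun p => by
    rw [← HomologicalComplex.comp_f, biprod.inl_fst, HomologicalComplex.id_f]
  have hinrsnd : ∀ p : ℤ,
      (biprod.inr : truncGE Z 1 ⟶ truncLE Z 0 ⊞ truncGE Z 1).f p ≫
        (biprod.snd : truncLE Z 0 ⊞ truncGE Z 1 ⟶ truncGE Z 1).f p =
        𝟙 ((truncGE Z 1).X p) := fun p => by
    rw [← HomologicalComplex.comp_f, biprod.inr_snd, HomologicalComplex.id_f]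
  have htotal : ∀ p : ℤ,
      (biprod.fst : truncLE Z 0 ⊞ truncGE Z 1 ⟶ truncLE Z 0).f p ≫
        (biprod.inl : truncLE Z 0 ⟶ truncLE Z 0 ⊞ truncGE Z 1).f p +
      (biprod.snd : truncLE Z 0 ⊞ truncGE Z 1 ⟶ truncGE Z 1).f p ≫
        (biprod.inr : truncGE Z 1 ⟶ truncLE Z 0 ⊞ truncGE Z 1).f p =
        𝟙 ((truncLE Z 0 ⊞ truncGE Z 1).X p) := fun p => by
    have := congrArg (fun (φ : truncLE Z 0 ⊞ truncGE Z 1 ⟶ truncLE Z 0 ⊞ truncGE Z 1) => φ.f p)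
      (biprod.total (X := truncLE Z 0) (Y := truncGE Z 1))
    simp only [HomologicalComplex.add_f_apply, HomologicalComplex.comp_f,
      HomologicalComplex.id_f] at this
    exact this
  have hsndzero : ∀ p : ℤ, p ≤ 0 →
      (biprod.snd : truncLE Z 0 ⊞ truncGE Z 1 ⟶ truncGE Z 1).f p = 0 := fun p hp =>
    (IsZero.of_iso (isZero_zero C) (eqToIso (hB1 p hp))).eq_of_tgt _ _
  have hfstzero : ∀ p : ℤ, ¬ p ≤ 0 →
      (biprod.fst : truncLE Z 0 ⊞ truncGE Z 1 ⟶ truncLE Z 0).f p = 0 := fun p hp =>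
    (IsZero.of_iso (isZero_zero C) (eqToIso (hA1 p hp))).eq_of_tgt _ _
  refine ⟨truncLE Z 0, truncGE Z 1,
    ⟨0, fun i hi => IsZero.of_iso (isZero_zero C) (eqToIso (hA1 i (by omega)))⟩,
    ⟨1, fun i hi => IsZero.of_iso (isZero_zero C) (eqToIso (hB1 i (by omega)))⟩, ?_⟩
  refine ⟨Cochain.mk (fun p q hpq =>
      if hp : p ≤ 0 then (biprod.fst : truncLE Z 0 ⊞ truncGE Z 1 ⟶ truncLE Z 0).f p ≫
        eqToHom (show (truncLE Z 0).X p = Z.X q by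
          obtain rfl : q = p := (by omega); exact hA0 _ hp)
      else (biprod.snd : truncLE Z 0 ⊞ truncGE Z 1 ⟶ truncGE Z 1).f p ≫
        eqToHom (show (truncGE Z 1).X p = Z.X q by
          obtain rfl : q = p := (by omega); exact hB0 _ hp)),
    Cochain.mk (fun p q hpq =>
      if hq : q ≤ 0 then
        eqToHom (show Z.X p = (truncLE Z 0).X q by
          obtain rfl : q = p := (by omega); exact (hA0 _ hq).symm) ≫
          (biprod.inl : truncLE Z 0 ⟶ truncLE Z 0 ⊞ truncGE Z 1).f q
      else
        eqToHom (show Z.X p = (truncGE Z 1).X q by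
          obtain rfl : q = p := (by omega); exact (hB0 _ hq).symm) ≫
          (biprod.inr : truncGE Z 1 ⟶ truncLE Z 0 ⊞ truncGE Z 1).f q), ?_, ?_, ?_, ?_⟩
  · -- `δ ι` is bounded
    apply Set.Finite.subset (Set.finite_singleton 0)
    intro p hp
    simp only [Set.mem_setOf_eq] at hp
    by_contra hne
    apply hp
    simp only [Set.mem_singleton_iff] at hne
    rw [δ_zero_cochain_v _ p (p + 1) rfl, Cochain.mk_v, Cochain.mk_v]
    rcases (by omega : p ≤ -1 ∨ 1 ≤ p) with h | h
    · rw [dif_pos (by omega : p ≤ 0), dif_pos (by omega : p + 1 ≤ 0)]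
      have comm := (biprod.fst : truncLE Z 0 ⊞ truncGE Z 1 ⟶ truncLE Z 0).comm p (p + 1)
      rw [← Category.assoc ((truncLE Z 0 ⊞ truncGE Z 1).d p (p + 1)), ← comm,
        Category.assoc, hAd p (by omega)]
      simp [eqToHom_trans]
    · rw [dif_neg (by omega : ¬ p ≤ 0), dif_neg (by omega : ¬ p + 1 ≤ 0)]
      have comm := (biprod.snd : truncLE Z 0 ⊞ truncGE Z 1 ⟶ truncGE Z 1).comm p (p + 1)
      rw [← Category.assoc ((truncLE Z 0 ⊞ truncGE Z 1).d p (p + 1)), ← comm,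
        Category.assoc, hBd p (by omega)]
      simp [eqToHom_trans]
  · -- `δ π` is bounded
    apply Set.Finite.subset (Set.finite_singleton 0)
    intro p hp
    simp only [Set.mem_setOf_eq] at hp
    by_contra hne
    apply hp
    simp only [Set.mem_singleton_iff] at hne
    rw [δ_zero_cochain_v _ p (p + 1) rfl, Cochain.mk_v, Cochain.mk_v]
    rcases (by omega : p ≤ -1 ∨ 1 ≤ p) with h | h
    · rw [dif_pos (by omega : p ≤ 0), dif_pos (by omega : p + 1 ≤ 0)]
      have comm := (biprod.inl : truncLE Z 0 ⟶ truncLE Z 0 ⊞ truncGE Z 1).comm p (p + 1)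
      rw [Category.assoc, comm, hAd p (by omega)]
      simp [eqToHom_trans]
    · rw [dif_neg (by omega : ¬ p ≤ 0), dif_neg (by omega : ¬ p + 1 ≤ 0)]
      have comm := (biprod.inr : truncGE Z 1 ⟶ truncLE Z 0 ⊞ truncGE Z 1).comm p (p + 1)
      rw [Category.assoc, comm, hBd p (by omega)]
      simp [eqToHom_trans]
  · -- `ι ≫ π = 𝟙`
    apply Cochain.ext₀
    intro p
    rw [Cochain.zero_cochain_comp_v _ _ p p (add_zero p), Cochain.mk_v, Cochain.mk_v,
      Cochain.ofHom_v, HomologicalComplex.id_f]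
    by_cases hp : p ≤ 0
    · rw [dif_pos hp, dif_pos hp, ← htotal p, hsndzero p hp]
      simp
    · rw [dif_neg hp, dif_neg hp, ← htotal p, hfstzero p hp]
      simp
  · -- `π ≫ ι = 𝟙` exactly, so the difference is `0`, which is bounded
    have heq : (Cochain.mk (fun p q hpq =>
      if hq : q ≤ 0 then
        eqToHom (show Z.X p = (truncLE Z 0).X q by
          obtain rfl : q = p := (by omega); exact (hA0 _ hq).symm) ≫
          (biprod.inl : truncLE Z 0 ⟶ truncLE Z 0 ⊞ truncGE Z 1).f q
      else
        eqToHom (show Z.X p = (truncGE Z 1).X q by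
          obtain rfl : q = p := (by omega); exact (hB0 _ hq).symm) ≫
          (biprod.inr : truncGE Z 1 ⟶ truncLE Z 0 ⊞ truncGE Z 1).f q)).comp
      (Cochain.mk (fun p q hpq =>
      if hp : p ≤ 0 then (biprod.fst : truncLE Z 0 ⊞ truncGE Z 1 ⟶ truncLE Z 0).f p ≫
        eqToHom (show (truncLE Z 0).X p = Z.X q by
          obtain rfl : q = p := (by omega); exact hA0 _ hp)
      else (biprod.snd : truncLE Z 0 ⊞ truncGE Z 1 ⟶ truncGE Z 1).f p ≫
        eqToHom (show (truncGE Z 1).X p = Z.X q by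
          obtain rfl : q = p := (by omega); exact hB0 _ hp)))
        (zero_add 0) = Cochain.ofHom (𝟙 Z) := by
      apply Cochain.ext₀
      intro p
      rw [Cochain.zero_cochain_comp_v _ _ p p (add_zero p), Cochain.mk_v, Cochain.mk_v,
        Cochain.ofHom_v, HomologicalComplex.id_f]
      by_cases hp : p ≤ 0
      · rw [dif_pos hp, dif_pos hp, Category.assoc,
          ← Category.assoc ((biprod.inl : truncLE Z 0 ⟶ truncLE Z 0 ⊞ truncGE Z 1).f p),
          hinlfst p]
        simp
      · rw [dif_neg hp, dif_neg hp, Category.assoc,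
          ← Category.assoc ((biprod.inr : truncGE Z 1 ⟶ truncLE Z 0 ⊞ truncGE Z 1).f p),
          hinrsnd p]
        simp
    rw [heq, sub_self]
    apply Set.Finite.subset Set.finite_empty
    intro p hp
    simp only [Set.mem_setOf_eq, Cochain.zero_v, ne_eq, not_true_eq_false] at hp
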